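/- arXiv:1903.10870 — 8 statements merged into one kernel-verified Lean document; each statement's English description precedes it below -/
import Mathlib

section
/- Suppose the sequence (x, y) is realizable by H. Then the number of mistakes of the Halving algorithm, M = |{t : Fin T | p t ≠ y t}|, satisfies 2^M ≤ |H|; equivalently, M ≤ log₂ |H|. -/
/-- In the realizable case, the Halving algorithm makes at most
`log₂ |H|` mistakes: `2 ^ M ≤ |H|`. -/
theorem halving_mistake_bound_realizable {X : Type*} (T : ℕ)
    (H : Finset (X → Bool)) (x : Fin T → X) (y : Fin T → Bool)
    (V : ℕ → Finset (X → Bool))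
    (hV0 : V 0 = H)
    (hVs : ∀ t : Fin T, V (t.val + 1) = (V t.val).filter (fun h => h (x t) = y t))
    (hreal : ∃ hstar ∈ H, ∀ t : Fin T, hstar (x t) = y t)
    (p : Fin T → Bool)
    (hp : ∀ t : Fin T, p t =
      decide (((V t.val).filter fun h => h (x t) = false).card ≤
        ((V t.val).filter fun h => h (x t) = true).card)) :
    2 ^ (Finset.univ.filter fun t : Fin T => p t ≠ y t).card ≤ H.card ∧
      (Finset.univ.filter fun t : Fin T => p t ≠ y t).card ≤ Nat.log 2 H.card := by
  obtain ⟨hstar, hstarH, hstarx⟩ := hreal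
  have hmem : ∀ t, t ≤ T → hstar ∈ V t := by
    intro t
    induction t with
    | zero => intro _; simpa [hV0] using hstarH
    | succ n ih =>
      intro hn
      have hn' : n < T := hn
      rw [hVs ⟨n, hn'⟩]
      exact Finset.mem_filter.mpr ⟨ih (le_of_lt hn'), hstarx ⟨n, hn'⟩⟩
  have key : ∀ t, t ≤ T →
      2 ^ ((Finset.range t).filter
        (fun i => ∃ h : i < T, p ⟨i, h⟩ ≠ y ⟨i, h⟩)).card * (V t).card ≤ H.card := by
    intro t
    induction t with
    | zero => intro _; simp [hV0]
    | succ n ih =>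
      intro hn
      have hn' : n < T := hn
      have ihn := ih (le_of_lt hn')
      have hsub : V (n + 1) ⊆ V n := by
        rw [hVs ⟨n, hn'⟩]; exact Finset.filter_subset _ _
      have hab : ((V n).filter (fun h => h (x ⟨n, hn'⟩) = true)).card
          + ((V n).filter (fun h => h (x ⟨n, hn'⟩) = false)).card = (V n).card := by
        have := Finset.card_filter_add_card_filter_not
          (s := V n) (p := fun h => h (x ⟨n, hn'⟩) = true)
        simpa using this
      have hrange : ((Finset.range (n+1)).filter
          (fun i => ∃ h : i < T, p ⟨i, h⟩ ≠ y ⟨i, h⟩)).card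
          = ((Finset.range n).filter
            (fun i => ∃ h : i < T, p ⟨i, h⟩ ≠ y ⟨i, h⟩)).card
            + (if p ⟨n, hn'⟩ ≠ y ⟨n, hn'⟩ then 1 else 0) := by
        rw [Finset.range_add_one, Finset.filter_insert]
        by_cases hm : p ⟨n, hn'⟩ ≠ y ⟨n, hn'⟩
        · rw [if_pos ⟨hn', hm⟩, Finset.card_insert_of_notMem (by simp), if_pos hm]
        · have hne : ¬∃ h : n < T, p ⟨n, h⟩ ≠ y ⟨n, h⟩ := by
            rintro ⟨h, hne⟩
            exact hm hne
          rw [if_neg hne, if_neg hm]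
          rfl
      by_cases hm : p ⟨n, hn'⟩ ≠ y ⟨n, hn'⟩
      · -- mistake: 2 * |V (n+1)| ≤ |V n|
        have hhalf : 2 * (V (n+1)).card ≤ (V n).card := by
          have hpn := hp ⟨n, hn'⟩
          rw [hVs ⟨n, hn'⟩]
          simp only [Fin.val_mk] at hpn ⊢
          cases hy : y ⟨n, hn'⟩ with
          | true =>
            have hpf : p ⟨n, hn'⟩ = false := by
              cases hpv : p ⟨n, hn'⟩
              · rfl
              · exact absurd (hpv.trans hy.symm) hm
            rw [hpf] at hpn
            have hlt := Nat.lt_of_not_le (of_decide_eq_false hpn.symm)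
            linarith
          | false =>
            have hpt : p ⟨n, hn'⟩ = true := by
              cases hpv : p ⟨n, hn'⟩
              · exact absurd (hpv.trans hy.symm) hm
              · rfl
            rw [hpt] at hpn
            have hle := of_decide_eq_true hpn.symm
            linarith
        calc 2 ^ ((Finset.range (n+1)).filter
              (fun i => ∃ h : i < T, p ⟨i, h⟩ ≠ y ⟨i, h⟩)).card * (V (n+1)).card
            = 2 ^ ((Finset.range n).filter
              (fun i => ∃ h : i < T, p ⟨i, h⟩ ≠ y ⟨i, h⟩)).card
              * (2 * (V (n+1)).card) := by
              rw [hrange, if_pos hm, pow_succ]; ring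
          _ ≤ 2 ^ ((Finset.range n).filter
              (fun i => ∃ h : i < T, p ⟨i, h⟩ ≠ y ⟨i, h⟩)).card * (V n).card :=
              Nat.mul_le_mul_left _ hhalf
          _ ≤ H.card := ihn
      · calc 2 ^ ((Finset.range (n+1)).filter
              (fun i => ∃ h : i < T, p ⟨i, h⟩ ≠ y ⟨i, h⟩)).card * (V (n+1)).card
            = 2 ^ ((Finset.range n).filter
              (fun i => ∃ h : i < T, p ⟨i, h⟩ ≠ y ⟨i, h⟩)).card * (V (n+1)).card := by
              rw [hrange, if_neg hm]
              norm_num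
          _ ≤ 2 ^ ((Finset.range n).filter
              (fun i => ∃ h : i < T, p ⟨i, h⟩ ≠ y ⟨i, h⟩)).card * (V n).card :=
              Nat.mul_le_mul_left _ (Finset.card_le_card hsub)
          _ ≤ H.card := ihn
  have hcard : (Finset.univ.filter fun t : Fin T => p t ≠ y t).card
      = ((Finset.range T).filter (fun i => ∃ h : i < T, p ⟨i, h⟩ ≠ y ⟨i, h⟩)).card := by
    apply Finset.card_bij (fun s _ => s.val)
    · intro s hs
      simp only [Finset.mem_filter, Finset.mem_range]
      exact ⟨s.isLt, s.isLt, by simpa using (Finset.mem_filter.mp hs).2⟩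
    · intro s _ t _ h; exact Fin.ext h
    · intro i hi
      simp only [Finset.mem_filter, Finset.mem_range] at hi
      obtain ⟨hiT, hiT', hP⟩ := hi
      exact ⟨⟨i, hiT⟩, by simpa using hP, rfl⟩
  have hVT : 1 ≤ (V T).card := Finset.card_pos.mpr ⟨hstar, hmem T le_rfl⟩
  have hfinal : 2 ^ (Finset.univ.filter fun t : Fin T => p t ≠ y t).card ≤ H.card := by
    calc 2 ^ (Finset.univ.filter fun t : Fin T => p t ≠ y t).card
        ≤ 2 ^ (Finset.univ.filter fun t : Fin T => p t ≠ y t).card * (V T).card :=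
          Nat.le_mul_of_pos_right _ hVT
      _ ≤ H.card := by rw [hcard]; exact key T le_rfl
  refine ⟨hfinal, ?_⟩
  exact (Nat.le_log_iff_pow_le (by norm_num)
    (Finset.card_pos.mpr ⟨hstar, hstarH⟩).ne').mpr hfinal
end

section
/- If the Halving algorithm makes a mistake at round t (i.e. p t ≠ y t), then 2 · |V (t+1)| ≤ |V t|. -/
/-- Whenever Halving makes a mistake, the version space at least halves. -/
theorem halving_halves_on_mistake {X : Type*} (T : ℕ)
    (H : Finset (X → Bool)) (x : Fin T → X) (y : Fin T → Bool)
    (V : ℕ → Finset (X → Bool))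
    (hV0 : V 0 = H)
    (hVs : ∀ t : Fin T, V (t.val + 1) = (V t.val).filter (fun h => h (x t) = y t))
    (p : Fin T → Bool)
    (hp : ∀ t : Fin T, p t =
      decide (((V t.val).filter fun h => h (x t) = false).card ≤
        ((V t.val).filter fun h => h (x t) = true).card))
    (t : Fin T) (hmist : p t ≠ y t) :
    2 * (V (t.val + 1)).card ≤ (V t.val).card := by
  have hsplit := Finset.card_filter_add_card_filter_not
    (s := V t.val) (p := fun h => h (x t) = true)
  simp only [Bool.not_eq_true] at hsplit
  rw [hVs t]
  have hpt := hp t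
  set a := ((V t.val).filter fun h => h (x t) = true).card with ha
  set b := ((V t.val).filter fun h => h (x t) = false).card with hb
  cases hyt : y t with
  | true =>
    have hpf : p t = false := by
      cases hpt' : p t
      · rfl
      · exact absurd hyt (by simp [hpt'] at hmist; simp [hmist])
    rw [hpf] at hpt
    have hlt : a < b := by
      by_contra hc
      push_neg at hc
      simp [hc] at hpt
    rw [← ha]
    clear_value a b; clear ha hb hpt hp hVs hV0 hmist hpf; omega
  | false =>
    have hpf : p t = true := by
      cases hpt' : p t
      · exact absurd hyt (by simp [hpt'] at hmist; simp [hmist])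
      · rfl
    rw [hpf] at hpt
    have hle : b ≤ a := of_decide_eq_true hpt.symm
    rw [← hb]
    clear_value a b; clear ha hb hpt hp hVs hV0 hmist hpf; omega
end

section
/- Let H be a set of functions X → Bool that admits a shattered tree of depth d, and let A : List (X × Bool) → X → Bool be any deterministic online learner (mapping the history of past labelled examples and the current instance to a predicted label). Then there exist x : Fin d → X and y : Fin d → Bool such that the sequence is realizable by H (there exists h ∈ H with h (x t) = y t for all t < d) and yet A errs at every round: for every t < d, A [(x 0, y 0), …, (x (t−1), y (t−1))] (x t) ≠ y t. In particular, no algorithm has a mistake bound on realizable sequences strictly smaller than Ldim(H). -/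
/-- A shattered tree of depth `d` for `V`: a labelling `v` of Boolean lists (nodes of
a complete binary tree; only lists of length `< d` matter) by instances such that every
branch `ε` is realized by some hypothesis in `V`. -/
def IsShatteredTree {X : Type*} (V : Set (X → Bool)) (d : ℕ) (v : List Bool → X) : Prop :=
  ∀ ε : Fin d → Bool, ∃ h ∈ V, ∀ t : Fin d,
    h (v (List.ofFn fun s : Fin t.val => ε ⟨s.val, s.isLt.trans t.isLt⟩)) = ε t

/-- Adversarial history of length `n` against learner `A` along tree `v`. -/
def advPath {X : Type*} (A : List (X × Bool) → X → Bool) (v : List Bool → X) :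
    ℕ → List (X × Bool)
  | 0 => []
  | n + 1 =>
    let P := advPath A v n
    let xn := v (P.map Prod.snd)
    P ++ [(xn, ! A P xn)]

/-- Instance played at round `n`. -/
def advX {X : Type*} (A : List (X × Bool) → X → Bool) (v : List Bool → X) (n : ℕ) : X :=
  v ((advPath A v n).map Prod.snd)

/-- Label played at round `n`. -/
def advY {X : Type*} (A : List (X × Bool) → X → Bool) (v : List Bool → X) (n : ℕ) : Bool :=
  ! A (advPath A v n) (advX A v n)

lemma advPath_eq_ofFn {X : Type*} (A : List (X × Bool) → X → Bool) (v : List Bool → X) :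
    ∀ n, advPath A v n = List.ofFn (fun s : Fin n => (advX A v s, advY A v s)) := by
  intro n
  induction n with
  | zero => simp [advPath]
  | succ n ih =>
    rw [List.ofFn_succ']
    simp only [Fin.coe_castSucc, Fin.val_last, List.concat_eq_append]
    rw [advPath]
    simp only [← ih]
    rfl

lemma advPath_snd {X : Type*} (A : List (X × Bool) → X → Bool) (v : List Bool → X) (n : ℕ) :
    (advPath A v n).map Prod.snd = List.ofFn (fun s : Fin n => advY A v s) := by
  rw [advPath_eq_ofFn, List.map_ofFn]; rfl

/-- If `H` admits a shattered tree of depth `d`, then for any deterministic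
online learner `A` there is a realizable sequence of length `d` on which `A` errs at
every round. -/
theorem online_learner_lower_bound {X : Type*} (H : Set (X → Bool)) (d : ℕ)
    (htree : ∃ v : List Bool → X, IsShatteredTree H d v)
    (A : List (X × Bool) → X → Bool) :
    ∃ (x : Fin d → X) (y : Fin d → Bool),
      (∃ h ∈ H, ∀ t : Fin d, h (x t) = y t) ∧
      ∀ t : Fin d,
        A (List.ofFn fun s : Fin t.val =>
            (x ⟨s.val, s.isLt.trans t.isLt⟩, y ⟨s.val, s.isLt.trans t.isLt⟩)) (x t)
          ≠ y t := by
  obtain ⟨v, hv⟩ := htree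
  refine ⟨fun t => advX A v t, fun t => advY A v t, ?_, ?_⟩
  · obtain ⟨h, hH, hh⟩ := hv (fun t => advY A v t)
    refine ⟨h, hH, fun t => ?_⟩
    have := hh t
    rwa [show (List.ofFn fun s : Fin t.val =>
        advY A v (⟨s.val, s.isLt.trans t.isLt⟩ : Fin d).val)
        = (advPath A v t.val).map Prod.snd by rw [advPath_snd]] at this
  · intro t
    have : (List.ofFn fun s : Fin t.val =>
        (advX A v (⟨s.val, s.isLt.trans t.isLt⟩ : Fin d).val,
         advY A v (⟨s.val, s.isLt.trans t.isLt⟩ : Fin d).val)) = advPath A v t.val := by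
      rw [advPath_eq_ofFn]
    rw [this]
    simp [advY]
end

section
/- If H is a finite set of functions X → Bool and there exists a shattered tree of depth d for H, then 2^d ≤ |H|. Consequently Ldim(H) ≤ log₂ |H|. -/
/-- Littlestone dimension. -/
noncomputable def Ldim {X : Type*} (V : Set (X → Bool)) : ℕ :=
  sSup {d : ℕ | ∃ v : List Bool → X, IsShatteredTree V d v}

theorem pow_le_card_of_shattered {X : Type*} (H : Finset (X → Bool)) (d : ℕ)
    (v : List Bool → X) (hv : IsShatteredTree (↑H : Set (X → Bool)) d v) :
    2 ^ d ≤ H.card := by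
  classical
  choose f hfH hf using hv
  have hinj : Function.Injective f := by
    intro ε ε' heq
    by_contra hne
    have hex : ∃ n, ∃ hn : n < d, ε ⟨n, hn⟩ ≠ ε' ⟨n, hn⟩ := by
      rw [funext_iff] at hne
      push_neg at hne
      obtain ⟨t, ht⟩ := hne
      exact ⟨t.val, t.isLt, ht⟩
    obtain ⟨hn, hneq⟩ := Nat.find_spec hex
    set n := Nat.find hex with hn_def
    have hmin : ∀ m (hm : m < d), m < n → ε ⟨m, hm⟩ = ε' ⟨m, hm⟩ := by
      intro m hm hlt
      have := Nat.find_min hex hlt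
      push_neg at this
      exact this hm
    have hprefix : (List.ofFn fun s : Fin (⟨n, hn⟩ : Fin d).val =>
        ε ⟨s.val, s.isLt.trans (⟨n, hn⟩ : Fin d).isLt⟩) =
        (List.ofFn fun s : Fin (⟨n, hn⟩ : Fin d).val =>
        ε' ⟨s.val, s.isLt.trans (⟨n, hn⟩ : Fin d).isLt⟩) := by
      congr 1
      funext s
      exact hmin s.val _ s.isLt
    have h1 := hf ε ⟨n, hn⟩
    have h2 := hf ε' ⟨n, hn⟩
    rw [heq, hprefix] at h1
    exact hneq (h1 ▸ h2 ▸ rfl)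
  have : Fintype.card (Fin d → Bool) ≤ Fintype.card H := by
    exact Fintype.card_le_of_injective (fun ε => ⟨f ε, hfH ε⟩)
      (fun a b hab => hinj (congrArg Subtype.val hab))
  simpa [Fintype.card_coe] using this

/-- A finite class with a shattered tree of depth `d` has `2 ^ d ≤ |H|`;
consequently `Ldim(H) ≤ log₂ |H|`. -/
theorem ldim_le_log_card {X : Type*} (H : Finset (X → Bool)) (d : ℕ)
    (htree : ∃ v : List Bool → X, IsShatteredTree (↑H : Set (X → Bool)) d v) :
    2 ^ d ≤ H.card ∧ Ldim (↑H : Set (X → Bool)) ≤ Nat.log 2 H.card := by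
  obtain ⟨v, hv⟩ := htree
  refine ⟨pow_le_card_of_shattered H d v hv, ?_⟩
  have hne : {m : ℕ | ∃ w : List Bool → X,
      IsShatteredTree (↑H : Set (X → Bool)) m w}.Nonempty := ⟨d, v, hv⟩
  unfold Ldim
  apply csSup_le hne
  rintro m ⟨w, hw⟩
  have h2 := pow_le_card_of_shattered H m w hw
  exact Nat.le_log_of_pow_le one_lt_two h2
end

section
/- Let V be a set of functions X → Bool and let x ∈ X. If both {h ∈ V : h x = false} and {h ∈ V : h x = true} admit shattered trees of depth L, then V admits a shattered tree of depth L + 1. -/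
/-- If both label-restricted subclasses at a point `x` admit shattered
trees of depth `L`, then `V` admits a shattered tree of depth `L + 1`. -/
theorem shattered_tree_succ {X : Type*} (V : Set (X → Bool)) (x : X) (L : ℕ)
    (h0 : ∃ v : List Bool → X, IsShatteredTree {h ∈ V | h x = false} L v)
    (h1 : ∃ v : List Bool → X, IsShatteredTree {h ∈ V | h x = true} L v) :
    ∃ v : List Bool → X, IsShatteredTree V (L + 1) v := by
  obtain ⟨v0, hv0⟩ := h0
  obtain ⟨v1, hv1⟩ := h1
  refine ⟨fun l => match l with
    | [] => x
    | b :: l' => if b then v1 l' else v0 l', ?_⟩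
  intro ε
  have key : ∀ b : Bool, ε 0 = b →
      ∀ w : List Bool → X, IsShatteredTree {h ∈ V | h x = b} L w →
      (∀ l : List Bool, (fun l => match l with
        | [] => x
        | b' :: l' => if b' then v1 l' else v0 l') (b :: l) = w l) →
      ∃ h ∈ V, ∀ t : Fin (L + 1),
        h ((fun l => match l with
          | [] => x
          | b' :: l' => if b' then v1 l' else v0 l')
          (List.ofFn fun s : Fin t.val => ε ⟨s.val, s.isLt.trans t.isLt⟩)) = ε t := by
    intro b hb w hw hmatch
    obtain ⟨h, ⟨hV, hx⟩, hh⟩ := hw (fun t => ε t.succ)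
    refine ⟨h, hV, ?_⟩
    intro t
    induction t using Fin.cases with
    | zero => simpa [hb] using hx
    | succ s =>
      have := hh s
      have hofn : (List.ofFn fun u : Fin s.succ.val =>
          ε ⟨u.val, u.isLt.trans s.succ.isLt⟩) =
          b :: (List.ofFn fun u : Fin s.val => ε (⟨u.val, u.isLt.trans s.isLt⟩ : Fin L).succ) := by
        rw [List.ofFn_succ]
        simp only [hb.symm]
        congr 1
      rw [hofn, hmatch (List.ofFn fun u : Fin s.val => ε (⟨u.val, u.isLt.trans s.isLt⟩ : Fin L).succ)]
      convert this using 3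
  rcases hb : ε 0 with _ | _
  · exact key false hb v0 hv0 (fun l => by simp)
  · exact key true hb v1 hv1 (fun l => by simp)
end

section
/- Assume T ≥ 1, d ≥ 1, and set η = √(8 · ln d / T). Then the expected regret of Weighted Majority satisfies Σ_{t<T} L t − min_{i<d} (M i T : ℝ) ≤ √(0.5 · ln d · T). -/
lemma bern_hoeffding (p : ℝ) (hp0 : 0 ≤ p) (hp1 : p ≤ 1) {x : ℝ} (hx : 0 ≤ x) :
    Real.log (1 - p + p * Real.exp (-x)) ≤ -(p * x) + x ^ 2 / 8 := by
  set D : ℝ → ℝ := fun x => 1 - p + p * Real.exp (-x) with hDdef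
  have hD : ∀ t : ℝ, 0 < D t := by
    intro t
    rcases eq_or_lt_of_le hp0 with h | h
    · simp [hDdef, ← h]
    · have := Real.exp_pos (-t)
      have h1 : 0 < p * Real.exp (-t) := by positivity
      simp only [hDdef]
      nlinarith
  have hDderiv : ∀ t : ℝ, HasDerivAt D (-(p * Real.exp (-t))) t := by
    intro t
    have h1 : HasDerivAt (fun s : ℝ => Real.exp (-s)) (Real.exp (-t) * (-1)) t :=
      (Real.hasDerivAt_exp (-t)).comp t (hasDerivAt_neg t)
    have h2 := (h1.const_mul p).const_add (1 - p)
    refine h2.congr_deriv ?_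
    ring
  set F : ℝ → ℝ := fun x => x ^ 2 / 8 - p * x - Real.log (D x) with hFdef
  set F' : ℝ → ℝ := fun x => x / 4 - p + p * Real.exp (-x) / D x with hF'def
  have hFderiv : ∀ t : ℝ, HasDerivAt F (F' t) t := by
    intro t
    have h1 : HasDerivAt (fun x : ℝ => x ^ 2 / 8 - p * x) (2 * t / 8 - p) t := by
      have := ((hasDerivAt_pow 2 t).div_const 8).sub ((hasDerivAt_id t).const_mul p)
      refine this.congr_deriv ?_
      ring
    have h2 := (Real.hasDerivAt_log (hD t).ne').comp t (hDderiv t)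
    have h3 := h1.sub h2
    refine h3.congr_deriv ?_
    simp only [hF'def, Function.comp]
    field_simp
    ring
  have hF'deriv : ∀ t : ℝ, HasDerivAt F'
      (1 / 4 - p * Real.exp (-t) / D t + (p * Real.exp (-t) / D t) ^ 2) t := by
    intro t
    have h1 : HasDerivAt (fun x : ℝ => x / 4 - p) (1 / 4) t := by
      simpa using ((hasDerivAt_id t).div_const 4).sub_const p
    have hnum : HasDerivAt (fun x : ℝ => p * Real.exp (-x)) (-(p * Real.exp (-t))) t := by
      have h1 : HasDerivAt (fun s : ℝ => Real.exp (-s)) (Real.exp (-t) * (-1)) t :=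
        (Real.hasDerivAt_exp (-t)).comp t (hasDerivAt_neg t)
      have := h1.const_mul p
      refine this.congr_deriv ?_; ring
    have h2 : HasDerivAt (fun x => p * Real.exp (-x) / D x)
        ((-(p * Real.exp (-t)) * D t - p * Real.exp (-t) * (-(p * Real.exp (-t)))) / D t ^ 2) t :=
      hnum.div (hDderiv t) (hD t).ne'
    have := h1.add h2
    refine this.congr_deriv ?_
    have hDt := (hD t).ne'
    field_simp
    ring
  have hq : ∀ t : ℝ, 0 ≤ p * Real.exp (-t) / D t ∧ p * Real.exp (-t) / D t ≤ 1 := by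
    intro t
    constructor
    · exact div_nonneg (by positivity) (hD t).le
    · rw [div_le_one (hD t)]
      simp only [hDdef]
      nlinarith [Real.exp_pos (-t)]
  have hF'mono : Monotone F' := by
    refine monotone_of_hasDerivAt_nonneg hF'deriv fun t => ?_
    simp only [Pi.zero_apply]
    obtain ⟨h0, h1⟩ := hq t
    set q := p * Real.exp (-t) / D t
    nlinarith [sq_nonneg (q - 1/2)]
  have hD0 : D 0 = 1 := by simp [hDdef]
  have hF'0 : F' 0 = 0 := by
    simp [hF'def, hD0]
  have hF'nonneg : ∀ t : ℝ, 0 ≤ t → 0 ≤ F' t := by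
    intro t ht
    rw [← hF'0]
    exact hF'mono ht
  have hFmono : MonotoneOn F (Set.Ici 0) := by
    apply monotoneOn_of_hasDerivWithinAt_nonneg (convex_Ici 0)
      (fun t _ => (hFderiv t).continuousAt.continuousWithinAt)
      (fun t ht => (hFderiv t).hasDerivWithinAt)
    intro t ht
    rw [interior_Ici] at ht
    exact hF'nonneg t (le_of_lt ht)
  have hF0 : F 0 = 0 := by
    simp [hFdef, hD0]
  have := hFmono (Set.self_mem_Ici) hx hx
  rw [hF0] at this
  simp only [hFdef] at this
  linarith

/-- Expected regret bound of Weighted Majority with learning rate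
`η = √(8 ln d / T)`: `Σ_t L t − min_i M i T ≤ √(0.5 ln d · T)`. -/
theorem weighted_majority_regret (T d : ℕ) (hT : 1 ≤ T) (hd : 1 ≤ d)
    (y : Fin T → Bool) (f : Fin T → Fin d → Bool)
    (M : Fin d → ℕ → ℕ)
    (hM : ∀ i t, M i t =
      (Finset.univ.filter fun s : Fin T => s.val < t ∧ f s i ≠ y s).card)
    (η : ℝ) (hη : η = Real.sqrt (8 * Real.log d / T))
    (w : Fin d → ℕ → ℝ)
    (hw : ∀ i t, w i t = Real.exp (-η * M i t) / ∑ j, Real.exp (-η * M j t))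
    (L : Fin T → ℝ)
    (hL : ∀ t : Fin T, L t = ∑ i, w i t.val * (if f t i ≠ y t then (1 : ℝ) else 0)) :
    (∑ t, L t) -
        (Finset.univ.inf' (Finset.univ_nonempty_iff.mpr (Fin.pos_iff_nonempty.mp hd))
          fun i : Fin d => (M i T : ℝ))
      ≤ Real.sqrt (0.5 * Real.log d * T) := by
  classical
  have hne : (Finset.univ : Finset (Fin d)).Nonempty :=
    Finset.univ_nonempty_iff.mpr (Fin.pos_iff_nonempty.mp hd)
  have hη0 : 0 ≤ η := hη ▸ Real.sqrt_nonneg _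
  have hTpos : (0:ℝ) < T := by exact_mod_cast hT
  set A := Real.log d with hA
  set W : ℕ → ℝ := fun t => ∑ j, Real.exp (-η * (M j t : ℝ)) with hWdef
  have hWpos : ∀ t, 0 < W t := fun t =>
    Finset.sum_pos (fun j _ => Real.exp_pos _) hne
  -- step for mistake counts
  have hMstep : ∀ (i : Fin d) (t : Fin T),
      M i (t.val + 1) = M i t.val + (if f t i ≠ y t then 1 else 0) := by
    intro i t
    rw [hM, hM, Finset.card_filter, Finset.card_filter]
    have hsingle : ∑ s : Fin T, (if s = t ∧ f s i ≠ y s then (1:ℕ) else 0)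
        = (if f t i ≠ y t then 1 else 0) := by
      rw [Finset.sum_eq_single t]
      · simp
      · intro b _ hb; simp [hb]
      · simp
    rw [← hsingle, ← Finset.sum_add_distrib]
    apply Finset.sum_congr rfl
    intro s _
    have hiff : ((s : ℕ) < (t : ℕ) + 1 ∧ f s i ≠ y s) ↔
        (((s : ℕ) < (t : ℕ) ∧ f s i ≠ y s) ∨ (s = t ∧ f s i ≠ y s)) := by
      constructor
      · rintro ⟨h1, h2⟩
        rcases Nat.lt_or_ge (s : ℕ) (t : ℕ) with h | h
        · exact Or.inl ⟨h, h2⟩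
        · exact Or.inr ⟨Fin.ext (by omega), h2⟩
      · rintro (⟨h1, h2⟩ | ⟨h1, h2⟩)
        · exact ⟨by omega, h2⟩
        · subst h1; exact ⟨by omega, h2⟩
    by_cases hB : ((s : ℕ) < (t : ℕ) ∧ f s i ≠ y s)
    · have hC : ¬(s = t ∧ f s i ≠ y s) := by
        rintro ⟨h2, -⟩
        subst h2
        omega
      have hst : s ≠ t := fun h => hC ⟨h, hB.2⟩
      simp only [hiff]
      simp [hB, hC, hst, Or.inl hB]
    · by_cases hC : (s = t ∧ f s i ≠ y s)
      · simp [hiff, hB, hC]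
      · simp only [hiff]
        simp [hB, hC]
  -- per-round weight evolution
  have hexpstep : ∀ (t : Fin T) (j : Fin d),
      Real.exp (-η * (M j (t.val + 1) : ℝ)) =
        Real.exp (-η * (M j t.val : ℝ)) *
          (1 - (if f t j ≠ y t then (1:ℝ) else 0)
            + (if f t j ≠ y t then (1:ℝ) else 0) * Real.exp (-η)) := by
    intro t j
    rw [hMstep j t]
    by_cases hP : f t j ≠ y t
    · simp only [ne_eq, hP, not_false_eq_true, if_true]
      push_cast
      rw [show -η * ((M j t.val : ℝ) + 1) = -η * (M j t.val : ℝ) + -η by ring, Real.exp_add]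
      ring
    · simp [hP]
  have hwsum : ∀ tt : ℕ, ∑ i, w i tt = 1 := by
    intro tt
    have : ∑ i, w i tt = (∑ i, Real.exp (-η * (M i tt : ℝ))) / W tt := by
      rw [Finset.sum_div]
      exact Finset.sum_congr rfl fun i _ => hw i tt
    rw [this]
    exact div_self (hWpos tt).ne'
  have hwnn : ∀ (i : Fin d) (tt : ℕ), 0 ≤ w i tt := by
    intro i tt
    rw [hw]
    positivity
  have hL0 : ∀ t : Fin T, 0 ≤ L t := by
    intro t
    rw [hL]
    apply Finset.sum_nonneg
    intro i _
    exact mul_nonneg (hwnn i t.val) (by positivity)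
  have hL1 : ∀ t : Fin T, L t ≤ 1 := by
    intro t
    rw [hL]
    calc (∑ i, w i t.val * (if f t i ≠ y t then (1:ℝ) else 0)) ≤ ∑ i, w i t.val := by
          apply Finset.sum_le_sum
          intro i _
          by_cases hP : f t i ≠ y t <;> simp [hP, hwnn i t.val]
      _ = 1 := hwsum t.val
  have hWL : ∀ t : Fin T, W t.val * L t =
      ∑ j, Real.exp (-η * (M j t.val : ℝ)) * (if f t j ≠ y t then (1:ℝ) else 0) := by
    intro t
    rw [hL, Finset.mul_sum]
    apply Finset.sum_congr rfl
    intro j _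
    have hgen : ∀ a b c : ℝ, b ≠ 0 → b * (a / b * c) = a * c := by
      intro a b c hb
      field_simp
    rw [hw]
    exact hgen _ _ _ (hWpos t.val).ne'
  have hWstep : ∀ t : Fin T,
      W (t.val + 1) = W t.val * (1 - L t + L t * Real.exp (-η)) := by
    intro t
    have h1 : W (t.val + 1) = ∑ j, Real.exp (-η * (M j t.val : ℝ)) *
        (1 - (if f t j ≠ y t then (1:ℝ) else 0)
          + (if f t j ≠ y t then (1:ℝ) else 0) * Real.exp (-η)) :=
      Finset.sum_congr rfl fun j _ => hexpstep t j
    have h2 := hWL t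
    have h5 : (∑ j, Real.exp (-η * (M j t.val : ℝ))) = W t.val := rfl
    have h4 : (∑ j, Real.exp (-η * (M j t.val : ℝ)))
          - (∑ j, Real.exp (-η * (M j t.val : ℝ)) * (if f t j ≠ y t then (1:ℝ) else 0))
          + (∑ j, Real.exp (-η * (M j t.val : ℝ)) * (if f t j ≠ y t then (1:ℝ) else 0))
            * Real.exp (-η) = W (t.val + 1) := by
      rw [h1, Finset.sum_mul, ← Finset.sum_sub_distrib, ← Finset.sum_add_distrib]
      exact Finset.sum_congr rfl fun j _ => by ring
    rw [← h4, ← h2, h5]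
    ring
  have hDpos : ∀ t : Fin T, 0 < 1 - L t + L t * Real.exp (-η) := by
    intro t
    have he1 : Real.exp (-η) ≤ 1 := Real.exp_le_one_iff.mpr (by linarith)
    nlinarith [Real.exp_pos (-η), hL0 t, hL1 t,
      mul_nonneg (sub_nonneg.mpr (hL1 t)) (sub_nonneg.mpr he1)]
  have hlogstep : ∀ t : Fin T,
      Real.log (W (t.val + 1)) - Real.log (W t.val) ≤ -(L t * η) + η ^ 2 / 8 := by
    intro t
    rw [hWstep t, Real.log_mul (hWpos t.val).ne' (hDpos t).ne']
    have := bern_hoeffding (L t) (hL0 t) (hL1 t) hη0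
    linarith
  -- telescoping
  have tele : Real.log (W T) - Real.log (W 0)
      = ∑ i ∈ Finset.range T, (Real.log (W (i + 1)) - Real.log (W i)) :=
    (Finset.sum_range_sub (fun n => Real.log (W n)) T).symm
  have hsum : Real.log (W T) - Real.log (W 0) ≤ -((∑ t, L t) * η) + T * (η ^ 2 / 8) := by
    rw [tele, ← Fin.sum_univ_eq_sum_range (fun i => Real.log (W (i + 1)) - Real.log (W i)) T]
    have : ∑ t : Fin T, (-(L t * η) + η ^ 2 / 8)
        = -((∑ t, L t) * η) + T * (η ^ 2 / 8) := by
      rw [Finset.sum_add_distrib, Finset.sum_const, Finset.card_univ, Fintype.card_fin,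
        nsmul_eq_mul, Finset.sum_neg_distrib, ← Finset.sum_mul]
    rw [← this]
    exact Finset.sum_le_sum fun t _ => hlogstep t
  have hM0 : ∀ j : Fin d, M j 0 = 0 := by
    intro j
    rw [hM]
    simp
  have hW0 : Real.log (W 0) = A := by
    have : W 0 = d := by
      simp [hWdef, hM0]
    rw [this]
  -- lower bound on log W T via best expert
  obtain ⟨i0, -, hi0⟩ := Finset.exists_mem_eq_inf' hne (fun i : Fin d => (M i T : ℝ))
  have hlow : -(η * (M i0 T : ℝ)) ≤ Real.log (W T) := by
    have h1 : Real.exp (-η * (M i0 T : ℝ)) ≤ W T :=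
      Finset.single_le_sum (fun j (_ : j ∈ Finset.univ) => (Real.exp_pos (-η * (M j T : ℝ))).le)
        (Finset.mem_univ i0)
    calc -(η * (M i0 T : ℝ)) = Real.log (Real.exp (-η * (M i0 T : ℝ))) := by
          rw [Real.log_exp]; ring
      _ ≤ Real.log (W T) := Real.log_le_log (Real.exp_pos _) h1
  have key : η * ((∑ t, L t) - (M i0 T : ℝ)) ≤ A + T * (η ^ 2 / 8) := by
    nlinarith [hsum, hlow, hW0]
  rw [hi0]
  rcases eq_or_lt_of_le hd with hd1 | hd2
  · -- d = 1
    have hAz : A = 0 := by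
      rw [hA, ← hd1]
      simp
    have hRHS : Real.sqrt (0.5 * A * (T:ℝ)) = 0 := by
      rw [hAz]
      simp
    rw [hRHS]
    -- show LHS ≤ 0 : with d = 1, η = 0 and weights are 1
    subst hd1
    have hw1 : ∀ (i : Fin 1) (tt : ℕ), w i tt = 1 := by
      intro i tt
      have := hwsum tt
      rw [Fin.sum_univ_one] at this
      have hi : i = 0 := Subsingleton.elim i 0
      rw [hi]; exact this
    have hLsum : ∑ t, L t = (M i0 T : ℝ) := by
      have hi0' : i0 = 0 := Subsingleton.elim i0 0
      rw [hi0', hM]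
      have : ∀ t : Fin T, L t = (if f t 0 ≠ y t then (1:ℝ) else 0) := by
        intro t
        rw [hL, Fin.sum_univ_one, hw1, one_mul]
      rw [Finset.sum_congr rfl fun t _ => this t]
      have hfilter : (Finset.univ.filter fun s : Fin T => (s : ℕ) < T ∧ f s 0 ≠ y s)
          = Finset.univ.filter (fun s : Fin T => f s 0 ≠ y s) :=
        Finset.filter_congr fun s _ => by simp [s.isLt]
      rw [hfilter, Finset.sum_boole]
    linarith [hLsum.le, hLsum.ge]
  · -- d ≥ 2
    have hApos : 0 < A := Real.log_pos (by exact_mod_cast hd2)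
    have hηpos : 0 < η := by
      rw [hη]
      exact Real.sqrt_pos.mpr (by positivity)
    have hη2 : η ^ 2 = 8 * A / T := by
      rw [hη, Real.sq_sqrt (by positivity)]
    have hTerm : (T:ℝ) * (η ^ 2 / 8) = A := by
      rw [hη2]
      field_simp
    have hmul : η * Real.sqrt (0.5 * A * (T:ℝ)) = 2 * A := by
      rw [hη, ← Real.sqrt_mul (by positivity)]
      have : 8 * A / (T:ℝ) * (0.5 * A * T) = (2 * A) ^ 2 := by
        field_simp
        ring
      rw [this, Real.sqrt_sq (by positivity)]
    have h2 : η * ((∑ t, L t) - (M i0 T : ℝ)) ≤ η * Real.sqrt (0.5 * A * (T:ℝ)) := by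
      rw [hmul]
      linarith [key, hTerm]
    exact le_of_mul_le_mul_left h2 hηpos
end

section
/- Suppose the sequence (x, y) is realizable by H. Then V t ≠ ∅ for every t ≤ T, so the WM_Halving algorithm never switches to its Weighted Majority phase, and its total number of mistakes M = |{t : Fin T | p t ≠ y t}| satisfies 2^M ≤ |H|, i.e. M ≤ log₂ |H|. -/
/-- In the realizable case the version space never empties, so
WM_Halving stays in its Halving phase and its mistake count `M` satisfies
`2 ^ M ≤ |H|`, i.e. `M ≤ log₂ |H|`. -/
theorem wm_halving_realizable_bound {X : Type*} (T : ℕ)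
    (H : Finset (X → Bool)) (x : Fin T → X) (y : Fin T → Bool)
    (V : ℕ → Finset (X → Bool))
    (hV0 : V 0 = H)
    (hVs : ∀ t : Fin T, V (t.val + 1) = (V t.val).filter (fun h => h (x t) = y t))
    (hreal : ∃ hstar ∈ H, ∀ t : Fin T, hstar (x t) = y t)
    (p : Fin T → Bool)
    (hp : ∀ t : Fin T, p t =
      decide (((V t.val).filter fun h => h (x t) = false).card ≤
        ((V t.val).filter fun h => h (x t) = true).card)) :
    (∀ t ≤ T, (V t).Nonempty) ∧
      2 ^ (Finset.univ.filter fun t : Fin T => p t ≠ y t).card ≤ H.card ∧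
      (Finset.univ.filter fun t : Fin T => p t ≠ y t).card ≤ Nat.log 2 H.card := by
  obtain ⟨g, hgH, hg⟩ := hreal
  -- g stays in every version space
  have hmem : ∀ t ≤ T, g ∈ V t := by
    intro t ht
    induction t with
    | zero => rw [hV0]; exact hgH
    | succ n ih =>
      have hn : n < T := ht
      rw [hVs ⟨n, hn⟩]
      exact Finset.mem_filter.2 ⟨ih (le_of_lt hn), hg ⟨n, hn⟩⟩
  have hne : ∀ t ≤ T, (V t).Nonempty := fun t ht => ⟨g, hmem t ht⟩
  -- per-step cardinality facts
  have hsplit : ∀ t : Fin T,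
      ((V t.val).filter fun h => h (x t) = true).card +
        ((V t.val).filter fun h => h (x t) = false).card = (V t.val).card := by
    intro t
    have := Finset.card_filter_add_card_filter_not
      (s := V t.val) (p := fun h => h (x t) = true)
    simpa using this
  have hmist : ∀ t : Fin T, p t ≠ y t → 2 * (V (t.val + 1)).card ≤ (V t.val).card := by
    intro t hm
    rw [hVs t]
    have hs := hsplit t
    cases hy : y t with
    | false =>
      have hpt : p t = true := by
        cases hpv : p t
        · exact absurd (hpv.trans hy.symm) hm
        · rfl
      rw [hp t] at hpt
      have hle : ((V t.val).filter fun h => h (x t) = false).card ≤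
          ((V t.val).filter fun h => h (x t) = true).card := of_decide_eq_true hpt
      set a := ((V t.val).filter fun h => h (x t) = true).card with ha
      set b := ((V t.val).filter fun h => h (x t) = false).card with hb
      clear hpt hp hVs hV0 hsplit
      linarith
    | true =>
      have hpt : p t = false := by
        cases hpv : p t
        · rfl
        · exact absurd (hpv.trans hy.symm) hm
      rw [hp t] at hpt
      have hle : ¬ ((V t.val).filter fun h => h (x t) = false).card ≤
          ((V t.val).filter fun h => h (x t) = true).card := of_decide_eq_false hpt
      set a := ((V t.val).filter fun h => h (x t) = true).card with ha
      set b := ((V t.val).filter fun h => h (x t) = false).card with hb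
      clear hpt hp hVs hV0 hsplit
      push_neg at hle
      linarith
  have hmono : ∀ t : Fin T, (V (t.val + 1)).card ≤ (V t.val).card := by
    intro t
    rw [hVs t]
    exact Finset.card_filter_le _ _
  -- main induction
  have main : ∀ t ≤ T,
      2 ^ (Finset.univ.filter fun s : Fin T => s.val < t ∧ p s ≠ y s).card * (V t).card
        ≤ H.card := by
    intro t ht
    induction t with
    | zero =>
      have : (Finset.univ.filter fun s : Fin T => s.val < 0 ∧ p s ≠ y s) = ∅ := by
        apply Finset.filter_false_of_mem
        intro s _
        simp
      rw [this, hV0]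
      simp
    | succ n ih =>
      have hn : n < T := ht
      have ihn := ih (le_of_lt hn)
      have hcard : (Finset.univ.filter fun s : Fin T => s.val < n + 1 ∧ p s ≠ y s).card =
          (Finset.univ.filter fun s : Fin T => s.val < n ∧ p s ≠ y s).card +
            (if p ⟨n, hn⟩ ≠ y ⟨n, hn⟩ then 1 else 0) := by
        have hun : (Finset.univ.filter fun s : Fin T => s.val < n + 1 ∧ p s ≠ y s) =
            (Finset.univ.filter fun s : Fin T => s.val < n ∧ p s ≠ y s) ∪
              (Finset.univ.filter fun s : Fin T => s.val = n ∧ p s ≠ y s) := by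
          ext s
          simp only [Finset.mem_union, Finset.mem_filter, Finset.mem_univ, true_and]
          constructor
          · rintro ⟨hlt, hm⟩
            rcases Nat.lt_succ_iff_lt_or_eq.1 hlt with h | h
            · exact Or.inl ⟨h, hm⟩
            · exact Or.inr ⟨h, hm⟩
          · rintro (⟨h, hm⟩ | ⟨h, hm⟩)
            · exact ⟨Nat.lt_succ_of_lt h, hm⟩
            · exact ⟨by omega, hm⟩
        have hdisj : Disjoint
            (Finset.univ.filter fun s : Fin T => s.val < n ∧ p s ≠ y s)
            (Finset.univ.filter fun s : Fin T => s.val = n ∧ p s ≠ y s) := by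
          rw [Finset.disjoint_left]
          intro a ha hb
          simp only [Finset.mem_filter] at ha hb
          omega
        have hsing : (Finset.univ.filter fun s : Fin T => s.val = n ∧ p s ≠ y s).card =
            (if p ⟨n, hn⟩ ≠ y ⟨n, hn⟩ then 1 else 0) := by
          by_cases hm : p ⟨n, hn⟩ ≠ y ⟨n, hn⟩
          · rw [if_pos hm]
            have : (Finset.univ.filter fun s : Fin T => s.val = n ∧ p s ≠ y s) =
                {⟨n, hn⟩} := by
              ext s
              simp only [Finset.mem_filter, Finset.mem_univ, true_and,
                Finset.mem_singleton]
              constructor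
              · rintro ⟨hsv, _⟩; exact Fin.ext hsv
              · rintro rfl; exact ⟨rfl, hm⟩
            rw [this, Finset.card_singleton]
          · rw [if_neg hm]
            have : (Finset.univ.filter fun s : Fin T => s.val = n ∧ p s ≠ y s) = ∅ := by
              apply Finset.filter_false_of_mem
              rintro s _ ⟨hsv, hm'⟩
              exact hm (by rwa [show (⟨n, hn⟩ : Fin T) = s from (Fin.ext hsv.symm)])
            rw [this, Finset.card_empty]
        rw [hun, Finset.card_union_of_disjoint hdisj, hsing]
      by_cases hm : p ⟨n, hn⟩ ≠ y ⟨n, hn⟩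
      · rw [hcard, if_pos hm, pow_succ]
        have h2 := hmist ⟨n, hn⟩ hm
        calc 2 ^ (Finset.univ.filter fun s : Fin T => s.val < n ∧ p s ≠ y s).card * 2
              * (V (n + 1)).card
            = 2 ^ (Finset.univ.filter fun s : Fin T => s.val < n ∧ p s ≠ y s).card
              * (2 * (V (n + 1)).card) := by ring
          _ ≤ 2 ^ (Finset.univ.filter fun s : Fin T => s.val < n ∧ p s ≠ y s).card
              * (V n).card := Nat.mul_le_mul_left _ h2
          _ ≤ H.card := ihn
      · rw [hcard, if_neg hm, Nat.add_zero]
        calc 2 ^ (Finset.univ.filter fun s : Fin T => s.val < n ∧ p s ≠ y s).card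
              * (V (n + 1)).card
            ≤ 2 ^ (Finset.univ.filter fun s : Fin T => s.val < n ∧ p s ≠ y s).card
              * (V n).card := Nat.mul_le_mul_left _ (hmono ⟨n, hn⟩)
          _ ≤ H.card := ihn
  have hT := main T le_rfl
  have hfeq : (Finset.univ.filter fun s : Fin T => s.val < T ∧ p s ≠ y s) =
      (Finset.univ.filter fun s : Fin T => p s ≠ y s) := by
    apply Finset.filter_congr
    intro s _
    simp [s.isLt]
  rw [hfeq] at hT
  have hVT : 1 ≤ (V T).card := Finset.card_pos.2 (hne T le_rfl)
  have hpow : 2 ^ (Finset.univ.filter fun s : Fin T => p s ≠ y s).card ≤ H.card := by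
    calc 2 ^ (Finset.univ.filter fun s : Fin T => p s ≠ y s).card
        = 2 ^ (Finset.univ.filter fun s : Fin T => p s ≠ y s).card * 1 := by ring
      _ ≤ 2 ^ (Finset.univ.filter fun s : Fin T => p s ≠ y s).card * (V T).card :=
          Nat.mul_le_mul_left _ hVT
      _ ≤ H.card := hT
  exact ⟨hne, hpow, Nat.le_log_of_pow_le (by norm_num) hpow⟩
end

section
/- Suppose the sequence (x, y) is not realizable by H, let T₀ be the least t ≤ T with V T₀ = ∅ (which exists since unrealizability forces V T = ∅), and assume T₀ < T. Let d = |H| ≥ 1 with an enumeration h : Fin d → (X → Bool) of H, let M i t = |{s | s < t ∧ (h i) (x s) ≠ y s}| be the cumulative mistake count of hypothesis i over all rounds from the start, and set η = √(8 · ln d / (T − T₀)). Define the per-round loss of the WM_Halving algorithm by m t = (if p t ≠ y t then (1:ℝ) else 0) for t < T₀ (where p t is the Halving prediction), and m t = Σ_{i<d} w i t · (if (h i) (x t) ≠ y t then (1:ℝ) else 0) for T₀ ≤ t < T, where w i t = exp(−η · M i t) / Σ_{j<d} exp(−η · M j t). Then Σ_{t<T} m t − min_{i<d} (M i T : ℝ)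 ≤ (1 + log₂ |H|) + √(0.5 · ln |H| · (T − T₀)) (the additive term 1 + log₂|H| bounds the Halving-phase mistakes, including the possible mistake on the round at which the version space becomes empty). -/
open Real Finset

lemma bernoulli_hoeffding (q s : ℝ) (hq0 : 0 ≤ q) (hq1 : q ≤ 1) :
    1 - q + q * Real.exp s ≤ Real.exp (q * s + s ^ 2 / 8) := by
  set D : ℝ → ℝ := fun u => 1 - q + q * Real.exp u with hD
  have hDpos : ∀ u, 0 < D u := by
    intro u
    rcases eq_or_lt_of_le hq0 with h0 | h0
    · simp [hD, ← h0]
    · have : 0 < q * Real.exp u := mul_pos h0 (Real.exp_pos u)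
      have : 0 ≤ 1 - q := by linarith
      simp only [hD]
      nlinarith [Real.exp_pos u]
  have hDne : ∀ u, D u ≠ 0 := fun u => (hDpos u).ne'
  have hDd : ∀ u, HasDerivAt D (q * Real.exp u) u := by
    intro u
    simpa [hD] using ((Real.hasDerivAt_exp u).const_mul q).const_add (1 - q)
  set G : ℝ → ℝ := fun u => q + u / 4 - q * Real.exp u / D u with hG
  set F : ℝ → ℝ := fun u => q * u + u ^ 2 / 8 - Real.log (D u) with hF
  have hFd : ∀ u, HasDerivAt F (q + u / 4 - q * Real.exp u / D u) u := by
    intro u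
    have h1 : HasDerivAt (fun v : ℝ => q * v) q u := by
      simpa using (hasDerivAt_id u).const_mul q
    have h2 : HasDerivAt (fun v : ℝ => v ^ 2 / 8) (u / 4) u := by
      have := (hasDerivAt_pow 2 u).div_const 8
      refine this.congr_deriv ?_
      norm_num
      ring
    have h3 : HasDerivAt (fun v => Real.log (D v)) (q * Real.exp u / D u) u :=
      (hDd u).log (hDne u)
    exact (h1.add h2).sub h3
  have hGd : ∀ u, HasDerivAt G (1 / 4 -
      (q * Real.exp u * D u - q * Real.exp u * (q * Real.exp u)) / (D u) ^ 2) u := by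
    intro u
    have h1 : HasDerivAt (fun v : ℝ => q + v / 4) (1 / 4) u := by
      simpa using ((hasDerivAt_id u).div_const 4).const_add q
    have h2 : HasDerivAt (fun v => q * Real.exp v / D v)
        ((q * Real.exp u * D u - q * Real.exp u * (q * Real.exp u)) / (D u) ^ 2) u :=
      ((Real.hasDerivAt_exp u).const_mul q).div (hDd u) (hDne u)
    exact h1.sub h2
  have hGderiv_nonneg : ∀ u, 0 ≤ 1 / 4 -
      (q * Real.exp u * D u - q * Real.exp u * (q * Real.exp u)) / (D u) ^ 2 := by
    intro u
    set P : ℝ := q * Real.exp u / D u with hP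
    have gen : ∀ a b : ℝ, b ≠ 0 → (a * b - a * a) / b ^ 2 = a / b - (a / b) ^ 2 := by
      intro a b hb
      field_simp
    have hrw : (q * Real.exp u * D u - q * Real.exp u * (q * Real.exp u)) / (D u) ^ 2
        = P - P ^ 2 := by
      rw [hP]
      exact gen _ _ (hDne u)
    rw [hrw]
    nlinarith [sq_nonneg (2 * P - 1)]
  have hGmono : Monotone G := by
    apply monotone_of_deriv_nonneg
    · exact fun u => (hGd u).differentiableAt
    · intro u
      rw [(hGd u).deriv]
      exact hGderiv_nonneg u
  have hG0 : G 0 = 0 := by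
    simp [hG, hD, Real.exp_zero]
  have hFG : ∀ u, HasDerivAt F (G u) u := fun u => hFd u
  have hF0 : F 0 = 0 := by
    simp [hF, hD, Real.exp_zero]
  have hFdiff : Differentiable ℝ F := fun u => (hFG u).differentiableAt
  have hderivF : ∀ u, deriv F u = G u := fun u => (hFG u).deriv
  have key : 0 ≤ F s := by
    rcases le_total 0 s with hs | hs
    · have hmono : MonotoneOn F (Set.Ici (0:ℝ)) := by
        apply monotoneOn_of_deriv_nonneg (convex_Ici 0) hFdiff.continuous.continuousOn
          hFdiff.differentiableOn
        intro u hu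
        rw [interior_Ici] at hu
        rw [hderivF]
        have := hGmono (le_of_lt hu)
        linarith [hG0 ▸ this]
      have := hmono Set.self_mem_Ici (Set.mem_Ici.mpr hs) hs
      linarith [hF0 ▸ this]
    · have hanti : AntitoneOn F (Set.Iic (0:ℝ)) := by
        apply antitoneOn_of_deriv_nonpos (convex_Iic 0) hFdiff.continuous.continuousOn
          hFdiff.differentiableOn
        intro u hu
        rw [interior_Iic] at hu
        rw [hderivF]
        have := hGmono (le_of_lt hu)
        linarith [hG0 ▸ this]
      have := hanti (Set.mem_Iic.mpr hs) Set.self_mem_Iic hs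
      linarith [hF0 ▸ this]
  have hlog : Real.log (D s) ≤ q * s + s ^ 2 / 8 := by
    have := key
    simp only [hF] at this
    linarith
  calc D s = Real.exp (Real.log (D s)) := (Real.exp_log (hDpos s)).symm
    _ ≤ Real.exp (q * s + s ^ 2 / 8) := Real.exp_le_exp.mpr hlog

/-- Regret bound for WM_Halving in the unrealizable case: the Halving
phase contributes at most `1 + log₂ |H|` mistakes (including the round at which the
version space empties), and the Weighted Majority phase on the remaining `T − T₀`
rounds contributes at most `√(0.5 ln |H| (T − T₀))` regret. -/
theorem wm_halving_unrealizable_regret {X : Type*} (T : ℕ)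
    (H : Finset (X → Bool)) (x : Fin T → X) (y : Fin T → Bool)
    (V : ℕ → Finset (X → Bool))
    (hV0 : V 0 = H)
    (hVs : ∀ t : Fin T, V (t.val + 1) = (V t.val).filter (fun h => h (x t) = y t))
    (hnr : ¬ ∃ hstar ∈ H, ∀ t : Fin T, hstar (x t) = y t)
    (T₀ : ℕ) (hT₀lt : T₀ < T) (hT₀empty : V T₀ = ∅)
    (hT₀least : ∀ s < T₀, (V s).Nonempty)
    (d : ℕ) (hd : 1 ≤ d) (hdcard : d = H.card)
    (h : Fin d → (X → Bool)) (hinj : Function.Injective h) (hmem : ∀ i, h i ∈ H)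
    (M : Fin d → ℕ → ℕ)
    (hM : ∀ i t, M i t =
      (Finset.univ.filter fun s : Fin T => s.val < t ∧ h i (x s) ≠ y s).card)
    (η : ℝ) (hη : η = Real.sqrt (8 * Real.log d / (T - T₀)))
    (w : Fin d → ℕ → ℝ)
    (hw : ∀ i t, w i t = Real.exp (-η * M i t) / ∑ j, Real.exp (-η * M j t))
    (p : Fin T → Bool)
    (hp : ∀ t : Fin T, p t =
      decide (((V t.val).filter fun g => g (x t) = false).card ≤
        ((V t.val).filter fun g => g (x t) = true).card))
    (m : Fin T → ℝ)
    (hm1 : ∀ t : Fin T, t.val < T₀ → m t = (if p t ≠ y t then (1 : ℝ) else 0))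
    (hm2 : ∀ t : Fin T, T₀ ≤ t.val →
      m t = ∑ i, w i t.val * (if h i (x t) ≠ y t then (1 : ℝ) else 0)) :
    (∑ t, m t) -
        (Finset.univ.inf' (Finset.univ_nonempty_iff.mpr (Fin.pos_iff_nonempty.mp hd))
          fun i : Fin d => (M i T : ℝ))
      ≤ (1 + (Nat.log 2 H.card : ℝ)) +
          Real.sqrt (0.5 * Real.log H.card * (T - T₀)) := by
  have hT₀T : T₀ ≤ T := le_of_lt hT₀lt
  have hηnn : 0 ≤ η := hη ▸ Real.sqrt_nonneg _
  have hHcard : H.card = d := hdcard.symm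
  -- mistake indicator of hypothesis j at round s
  obtain ⟨l, hl⟩ : ∃ l : ℕ → Fin d → ℕ, ∀ s j, l s j =
      if hs : s < T then (if h j (x ⟨s, hs⟩) ≠ y ⟨s, hs⟩ then 1 else 0) else 0 :=
    ⟨_, fun _ _ => rfl⟩
  have hMsum : ∀ (j : Fin d) (t : ℕ), t ≤ T → M j t = ∑ s ∈ Finset.range t, l s j := by
    intro j t ht
    rw [hM, Finset.card_filter]
    have e1 : ∀ a : Fin T, (if a.val < t ∧ h j (x a) ≠ y a then 1 else 0) =
        (fun sn => if hs : sn < T then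
          (if sn < t ∧ h j (x ⟨sn, hs⟩) ≠ y ⟨sn, hs⟩ then 1 else 0) else 0) a.val := by
      intro a
      simp [a.isLt]
    rw [Finset.sum_congr rfl (fun a _ => e1 a),
      Fin.sum_univ_eq_sum_range (fun sn => if hs : sn < T then
        (if sn < t ∧ h j (x ⟨sn, hs⟩) ≠ y ⟨sn, hs⟩ then 1 else 0) else 0) T]
    rw [← Finset.sum_subset (Finset.range_subset_range.mpr ht)]
    · apply Finset.sum_congr rfl
      intro s hs
      have hst : s < t := Finset.mem_range.mp hs
      have hsT : s < T := lt_of_lt_of_le hst ht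
      simp [hl, hsT, hst]
    · intro s _ hs
      have hst : ¬ s < t := fun hc => hs (Finset.mem_range.mpr hc)
      split
      · simp [hst]
      · rfl
  have hMstep : ∀ (j : Fin d) (t : ℕ), t < T → M j (t + 1) = M j t + l t j := by
    intro j t ht
    rw [hMsum j (t+1) ht, hMsum j t (le_of_lt ht), Finset.sum_range_succ]
  -- Halving: a mistake halves the version space
  have halve : ∀ t : Fin T, p t ≠ y t → 2 * (V (t.val + 1)).card ≤ (V t.val).card := by
    intro t hpt
    have hsplit : ((V t.val).filter (fun g => g (x t) = true)).card +
        ((V t.val).filter (fun g => g (x t) = false)).card = (V t.val).card := by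
      have hfe : (V t.val).filter (fun g => ¬ g (x t) = true) =
          (V t.val).filter (fun g => g (x t) = false) := by
        apply Finset.filter_congr
        intro g _
        simp
      rw [← hfe, Finset.card_filter_add_card_filter_not
        (s := V t.val) (p := fun g => g (x t) = true)]
    rw [hVs t]
    cases hy : y t
    · have hptrue : p t = true := by revert hpt; cases hpb : p t <;> simp [hy]
      have hle : ((V t.val).filter (fun g => g (x t) = false)).card ≤
          ((V t.val).filter (fun g => g (x t) = true)).card := by
        rw [hp t] at hptrue
        exact of_decide_eq_true hptrue
      linarith [hsplit, hle]
    · have hpfalse : p t = false := by revert hpt; cases hpb : p t <;> simp [hy]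
      have hle : ¬ (((V t.val).filter (fun g => g (x t) = false)).card ≤
          ((V t.val).filter (fun g => g (x t) = true)).card) := by
        rw [hp t] at hpfalse
        exact of_decide_eq_false hpfalse
      linarith [hsplit, lt_of_not_ge hle]
  -- algorithm-mistake indicator during halving phase
  obtain ⟨b, hb⟩ : ∃ b : ℕ → ℕ, ∀ s, b s =
      if hs : s < T then (if p ⟨s, hs⟩ ≠ y ⟨s, hs⟩ then 1 else 0) else 0 :=
    ⟨_, fun _ => rfl⟩
  have descent : ∀ t, t ≤ T → (V t).card * 2 ^ (∑ s ∈ Finset.range t, b s) ≤ H.card := by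
    intro t
    induction t with
    | zero => intro _; simp [hV0]
    | succ u ih =>
      intro hu
      have huT : u < T := hu
      have ihu := ih (le_of_lt huT)
      rw [Finset.sum_range_succ]
      by_cases hmis : p ⟨u, huT⟩ ≠ y ⟨u, huT⟩
      · have hb1 : b u = 1 := by simp [hb, huT, hmis]
        have hug := halve ⟨u, huT⟩ hmis
        rw [hb1, pow_add, pow_one]
        calc (V (u+1)).card * (2 ^ (∑ s ∈ Finset.range u, b s) * 2)
            = (2 * (V (u+1)).card) * 2 ^ (∑ s ∈ Finset.range u, b s) := by ring
          _ ≤ (V u).card * 2 ^ (∑ s ∈ Finset.range u, b s) :=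
              Nat.mul_le_mul_right _ hug
          _ ≤ H.card := ihu
      · have hb0 : b u = 0 := by simp [hb, huT, hmis]
        have hsub : (V (u+1)).card ≤ (V u).card := by
          rw [hVs ⟨u, huT⟩]
          exact Finset.card_le_card (Finset.filter_subset _ _)
        rw [hb0, add_zero]
        exact le_trans (Nat.mul_le_mul_right _ hsub) ihu
  have hT₀pos : 0 < T₀ := by
    rcases Nat.eq_zero_or_pos T₀ with h0 | h0
    · exfalso
      have hne : (V 0).Nonempty := hV0 ▸ ⟨h ⟨0, hd⟩, hmem _⟩
      rw [h0] at hT₀least hT₀empty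
      exact Finset.not_nonempty_empty (hT₀empty ▸ hne)
    · exact h0
  set t1 := T₀ - 1 with ht1def
  have ht1 : t1 + 1 = T₀ := Nat.succ_pred_eq_of_pos hT₀pos
  have ht1T : t1 < T := by omega
  set K := ∑ s ∈ Finset.range t1, b s with hKdef
  have hK : K ≤ Nat.log 2 H.card := by
    have hVt1 : 1 ≤ (V t1).card := Finset.card_pos.mpr (hT₀least t1 (by omega))
    have h2K : 2 ^ K ≤ H.card := by
      calc 2 ^ K = 1 * 2 ^ K := (one_mul _).symm
        _ ≤ (V t1).card * 2 ^ K := Nat.mul_le_mul_right _ hVt1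
        _ ≤ H.card := descent t1 (by omega)
    have hHne : H.card ≠ 0 := by omega
    exact (Nat.le_log_iff_pow_le one_lt_two hHne).mpr h2K
  -- real-valued per-round losses as function on ℕ
  obtain ⟨m', hm'⟩ : ∃ m' : ℕ → ℝ, ∀ s, m' s = if hs : s < T then m ⟨s, hs⟩ else 0 :=
    ⟨_, fun _ => rfl⟩
  have hsum_fin : ∑ t, m t = ∑ s ∈ Finset.range T, m' s := by
    have e1 : ∀ a : Fin T, m a = m' a.val := by
      intro a
      simp [hm' a.val, a.isLt]
    rw [Finset.sum_congr rfl (fun a _ => e1 a), Fin.sum_univ_eq_sum_range m' T]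
  -- Halving phase bound
  have hA : ∑ s ∈ Finset.range T₀, m' s ≤ 1 + (Nat.log 2 H.card : ℝ) := by
    rw [← ht1, Finset.sum_range_succ]
    have h1 : ∑ s ∈ Finset.range t1, m' s = (K : ℝ) := by
      rw [hKdef]
      push_cast
      apply Finset.sum_congr rfl
      intro s hs
      have hst1 : s < t1 := Finset.mem_range.mp hs
      have hsT : s < T := by omega
      have hsT₀ : s < T₀ := by omega
      rw [hm' s, dif_pos hsT, hm1 ⟨s, hsT⟩ hsT₀, hb s, dif_pos hsT]
      split <;> simp
    have h2 : m' t1 ≤ 1 := by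
      rw [hm' t1, dif_pos ht1T, hm1 ⟨t1, ht1T⟩ (show t1 < T₀ by omega)]
      split <;> norm_num
    have h3 : (K : ℝ) ≤ (Nat.log 2 H.card : ℝ) := by exact_mod_cast hK
    linarith [h1, h2, h3]
  -- Weighted majority phase
  obtain ⟨Z, hZ⟩ : ∃ Z : ℕ → ℝ, ∀ t, Z t = ∑ j, Real.exp (-η * M j t) :=
    ⟨_, fun _ => rfl⟩
  have hZpos : ∀ t, 0 < Z t := by
    intro t
    rw [hZ t]
    exact Finset.sum_pos (fun j _ => Real.exp_pos _) ⟨⟨0, hd⟩, Finset.mem_univ _⟩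
  have hwnn : ∀ j t, 0 ≤ w j t := by
    intro j t
    rw [hw, ← hZ t]
    exact div_nonneg (Real.exp_nonneg _) (le_of_lt (hZpos t))
  have hwsum : ∀ t, ∑ j, w j t = 1 := by
    intro t
    simp only [hw]
    rw [← Finset.sum_div]
    apply div_self
    have := hZpos t
    rw [hZ t] at this
    exact this.ne'
  -- per-round recursion and bounds
  have hq01 : ∀ t, t < T → T₀ ≤ t → 0 ≤ m' t ∧ m' t ≤ 1 := by
    intro t htT hget
    rw [hm' t, dif_pos htT, hm2 ⟨t, htT⟩ hget]
    constructor
    · apply Finset.sum_nonneg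
      intro i _
      apply mul_nonneg (hwnn i t)
      split <;> norm_num
    · calc (∑ i, w i t * (if h i (x ⟨t, htT⟩) ≠ y ⟨t, htT⟩ then (1:ℝ) else 0))
          ≤ ∑ i, w i t := by
            apply Finset.sum_le_sum
            intro i _
            apply mul_le_of_le_one_right (hwnn i t)
            split <;> norm_num
        _ = 1 := hwsum t
  have hstep : ∀ t, t < T → T₀ ≤ t →
      Z (t + 1) ≤ Z t * Real.exp (-η * m' t + η ^ 2 / 8) := by
    intro t htT hget
    have hqm : m' t = ∑ i, w i t * (if h i (x ⟨t, htT⟩) ≠ y ⟨t, htT⟩ then (1:ℝ) else 0) := by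
      rw [hm' t, dif_pos htT]
      exact hm2 ⟨t, htT⟩ hget
    have hrec : Z (t + 1) = Z t * (1 - m' t + m' t * Real.exp (-η)) := by
      have e1 : ∀ j : Fin d, Real.exp (-η * (M j (t+1) : ℝ)) =
          Real.exp (-η * M j t) * (1 + (Real.exp (-η) - 1) *
            (if h j (x ⟨t, htT⟩) ≠ y ⟨t, htT⟩ then (1:ℝ) else 0)) := by
        intro j
        rw [hMstep j t htT]
        push_cast
        rw [mul_add, Real.exp_add]
        congr 1
        rw [hl t j, dif_pos htT]
        by_cases hc : h j (x ⟨t, htT⟩) ≠ y ⟨t, htT⟩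
        · rw [if_pos hc, if_pos hc]
          push_cast
          ring_nf
        · rw [if_neg hc, if_neg hc]
          push_cast
          simp
      calc Z (t + 1) = ∑ j, Real.exp (-η * (M j (t+1) : ℝ)) := hZ (t+1)
        _ = ∑ j, Real.exp (-η * M j t) * (1 + (Real.exp (-η) - 1) *
            (if h j (x ⟨t, htT⟩) ≠ y ⟨t, htT⟩ then (1:ℝ) else 0)) :=
          Finset.sum_congr rfl (fun j _ => e1 j)
        _ = Z t + (Real.exp (-η) - 1) * ∑ j, Real.exp (-η * M j t) *
            (if h j (x ⟨t, htT⟩) ≠ y ⟨t, htT⟩ then (1:ℝ) else 0) := by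
          rw [hZ t, Finset.mul_sum, ← Finset.sum_add_distrib]
          apply Finset.sum_congr rfl
          intro j _
          ring
        _ = Z t + (Real.exp (-η) - 1) * (Z t * m' t) := by
          have hZq : Z t * m' t = ∑ j, Real.exp (-η * M j t) *
              (if h j (x ⟨t, htT⟩) ≠ y ⟨t, htT⟩ then (1:ℝ) else 0) := by
            rw [hqm, Finset.mul_sum]
            apply Finset.sum_congr rfl
            intro j _
            rw [hw, ← hZ t]
            have hZne : Z t ≠ 0 := (hZpos t).ne'
            field_simp
          rw [hZq]
        _ = Z t * (1 - m' t + m' t * Real.exp (-η)) := by ring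
    rw [hrec]
    obtain ⟨hq0, hq1⟩ := hq01 t htT hget
    apply mul_le_mul_of_nonneg_left _ (le_of_lt (hZpos t))
    have := bernoulli_hoeffding (m' t) (-η) hq0 hq1
    calc 1 - m' t + m' t * Real.exp (-η) ≤
        Real.exp (m' t * (-η) + (-η) ^ 2 / 8) := this
      _ = Real.exp (-η * m' t + η ^ 2 / 8) := by rw [neg_sq]; ring_nf
  -- telescoping over the WM phase
  have tele : ∀ u, T₀ ≤ u → u ≤ T → Z u ≤ Z T₀ *
      Real.exp (-η * (∑ t ∈ Finset.Ico T₀ u, m' t) + ((u - T₀ : ℕ) : ℝ) * η ^ 2 / 8) := by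
    intro u hu
    induction u, hu using Nat.le_induction with
    | base =>
      intro _
      simp
    | succ u hu ih =>
      intro huT
      have huT' : u < T := huT
      have h1 := hstep u huT' hu
      have h2 := ih (le_of_lt huT')
      calc Z (u + 1) ≤ Z u * Real.exp (-η * m' u + η ^ 2 / 8) := h1
        _ ≤ (Z T₀ * Real.exp (-η * (∑ t ∈ Finset.Ico T₀ u, m' t) +
              ((u - T₀ : ℕ) : ℝ) * η ^ 2 / 8)) * Real.exp (-η * m' u + η ^ 2 / 8) :=
            mul_le_mul_of_nonneg_right h2 (Real.exp_nonneg _)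
        _ = Z T₀ * Real.exp (-η * (∑ t ∈ Finset.Ico T₀ (u+1), m' t) +
              ((u + 1 - T₀ : ℕ) : ℝ) * η ^ 2 / 8) := by
            rw [mul_assoc, ← Real.exp_add, Finset.sum_Ico_succ_top hu]
            congr 2
            have hnc : u + 1 - T₀ = (u - T₀) + 1 := by omega
            rw [hnc]
            push_cast
            ring
  obtain ⟨S, hSdef⟩ : ∃ S : ℝ, S = ∑ t ∈ Finset.Ico T₀ T, m' t := ⟨_, rfl⟩
  obtain ⟨i₀, -, hi₀⟩ := Finset.exists_mem_eq_inf'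
    (Finset.univ_nonempty_iff.mpr (Fin.pos_iff_nonempty.mp hd))
    (fun i : Fin d => (M i T : ℝ))
  have hsingle : Real.exp (-η * M i₀ T) ≤ Z T := by
    rw [hZ T]
    exact Finset.single_le_sum (f := fun j : Fin d => Real.exp (-η * (M j T : ℝ)))
      (fun j _ => Real.exp_nonneg _) (Finset.mem_univ i₀)
  have hZT₀ : Z T₀ ≤ d := by
    calc Z T₀ = ∑ _j : Fin d, Real.exp (-η * M _j T₀) := hZ T₀
      _ ≤ ∑ _j : Fin d, 1 := by
          apply Finset.sum_le_sum
          intro j _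
          rw [Real.exp_le_one_iff]
          have hmn : (0:ℝ) ≤ η * M j T₀ := mul_nonneg hηnn (Nat.cast_nonneg _)
          linarith
      _ = d := by simp
  have hcast : ((T - T₀ : ℕ) : ℝ) = (T : ℝ) - T₀ := by
    push_cast [Nat.cast_sub hT₀T]
    ring
  have hchain : Real.exp (-η * M i₀ T) ≤
      (d : ℝ) * Real.exp (-η * S + ((T : ℝ) - T₀) * η ^ 2 / 8) := by
    calc Real.exp (-η * M i₀ T) ≤ Z T := hsingle
      _ ≤ Z T₀ * Real.exp (-η * S + ((T : ℝ) - T₀) * η ^ 2 / 8) := by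
          have := tele T hT₀T le_rfl
          rwa [hcast, ← hSdef] at this
      _ ≤ (d : ℝ) * Real.exp (-η * S + ((T : ℝ) - T₀) * η ^ 2 / 8) :=
          mul_le_mul_of_nonneg_right hZT₀ (Real.exp_nonneg _)
  have hB : S - (M i₀ T : ℝ) ≤ Real.sqrt (0.5 * Real.log d * ((T : ℝ) - T₀)) := by
    rcases eq_or_lt_of_le hd with hd1 | hd2
    · -- d = 1 : the weights are constantly one, so S ≤ M i₀ T
      have huniq : ∀ j : Fin d, j = i₀ := by
        intro j
        apply Fin.ext
        omega
      have hmt : ∀ t, T₀ ≤ t → t < T → m' t = (l t i₀ : ℝ) := by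
        intro t hget htT
        rw [hm' t, dif_pos htT, hm2 ⟨t, htT⟩ hget]
        rw [Finset.sum_eq_single_of_mem i₀ (Finset.mem_univ i₀)
          (fun b _ hb => absurd (huniq b) hb)]
        have hw1 : w i₀ t = 1 := by
          rw [hw]
          rw [Finset.sum_eq_single_of_mem i₀ (Finset.mem_univ i₀)
            (fun b _ hb => absurd (huniq b) hb)]
          exact div_self (Real.exp_ne_zero _)
        rw [hw1, one_mul, hl t i₀, dif_pos htT]
        split <;> simp
      have hScast : S = ((∑ t ∈ Finset.Ico T₀ T, l t i₀ : ℕ) : ℝ) := by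
        rw [hSdef]
        push_cast
        apply Finset.sum_congr rfl
        intro t ht
        obtain ⟨h1, h2⟩ := Finset.mem_Ico.mp ht
        exact hmt t h1 h2
      have hMT : M i₀ T = (∑ t ∈ Finset.range T₀, l t i₀) +
          (∑ t ∈ Finset.Ico T₀ T, l t i₀) := by
        rw [hMsum i₀ T le_rfl, Finset.range_eq_Ico, Finset.range_eq_Ico]
        exact (Finset.sum_Ico_consecutive _ (Nat.zero_le T₀) hT₀T).symm
      have hSle : S ≤ (M i₀ T : ℝ) := by
        rw [hScast, hMT]
        push_cast
        have : (0:ℝ) ≤ (∑ t ∈ Finset.range T₀, l t i₀ : ℕ) := Nat.cast_nonneg _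
        push_cast at this
        linarith
      have : (0:ℝ) ≤ Real.sqrt (0.5 * Real.log d * ((T : ℝ) - T₀)) := Real.sqrt_nonneg _
      linarith
    · -- 1 < d : standard exponential-weights analysis
      have hdR : (1:ℝ) < d := by exact_mod_cast hd2
      have hL : 0 < Real.log d := Real.log_pos hdR
      set c : ℝ := (T : ℝ) - T₀ with hc
      have hcpos : 0 < c := by
        rw [hc]
        have : (T₀ : ℝ) < T := by exact_mod_cast hT₀lt
        linarith
      have hη2 : η ^ 2 = 8 * Real.log d / c := by
        rw [hη, Real.sq_sqrt]
        exact div_nonneg (by linarith) (le_of_lt hcpos)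
      have hηpos : 0 < η := by
        rw [hη]
        exact Real.sqrt_pos.mpr (div_pos (by linarith) hcpos)
      have hlog : -η * (M i₀ T : ℝ) ≤ Real.log d + (-η * S + c * η ^ 2 / 8) := by
        have h1 : Real.log (Real.exp (-η * M i₀ T)) ≤
            Real.log ((d : ℝ) * Real.exp (-η * S + c * η ^ 2 / 8)) :=
          Real.log_le_log (Real.exp_pos _) hchain
        rwa [Real.log_exp, Real.log_mul (by positivity) (Real.exp_ne_zero _),
          Real.log_exp] at h1
      have hLc : c * η ^ 2 / 8 = Real.log d := by
        rw [hη2]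
        field_simp [hcpos.ne']
      have hdiv : S - (M i₀ T : ℝ) ≤ 2 * Real.log d / η := by
        rw [le_div_iff₀ hηpos]
        nlinarith [hlog, hLc]
      have hval : (2 * Real.log d / η) ^ 2 = 0.5 * Real.log d * c := by
        rw [div_pow, hη2, div_div_eq_mul_div,
          div_eq_iff (ne_of_gt (show (0:ℝ) < 8 * Real.log d by linarith))]
        ring
      have hsq : Real.sqrt (0.5 * Real.log d * c) = 2 * Real.log d / η := by
        rw [← hval, Real.sqrt_sq (by positivity)]
      rw [hsq]
      exact hdiv
  -- assemble
  have hsplitsum : ∑ s ∈ Finset.range T, m' s =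
      (∑ s ∈ Finset.range T₀, m' s) + S := by
    rw [hSdef, Finset.range_eq_Ico, Finset.range_eq_Ico]
    exact (Finset.sum_Ico_consecutive _ (Nat.zero_le T₀) hT₀T).symm
  rw [hsum_fin, hsplitsum, hi₀]
  have hlogHd : Real.log (H.card : ℝ) = Real.log d := by rw [hHcard]
  rw [hlogHd]
  linarith [hA, hB]
end
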